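/- Let R be a ring such that every left R-module is pure injective (i.e., R is left pure semisimple). Let C be a class of left R-modules and D a class of right R-modules such that X^+ ∈ D for all X ∈ C. If f : A → C is a homomorphism of left R-modules with C ∈ C and f^+ : C^+ → A^+ is a D-precover of A^+, then f is a C-preenvelope of A. -/

import Mathlib

universe u

/-! Common definitions: character modules, purity, pure injectivity. -/

open MulOpposite


/-- The character group `M⁺ = Hom_ℤ(M, ℚ/ℤ)`. -/
def CharMod (M : Type u) [AddCommGroup M] : Type u := M →+ AddCircle (1 : ℚ)

instance (M : Type u) [AddCommGroup M] : AddCommGroup (CharMod M) :=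
  inferInstanceAs (AddCommGroup (M →+ AddCircle (1 : ℚ)))

instance (M : Type u) [AddCommGroup M] : FunLike (CharMod M) M (AddCircle (1 : ℚ)) :=
  inferInstanceAs (FunLike (M →+ AddCircle (1 : ℚ)) M (AddCircle (1 : ℚ)))

instance (M : Type u) [AddCommGroup M] :
    AddMonoidHomClass (CharMod M) M (AddCircle (1 : ℚ)) :=
  inferInstanceAs (AddMonoidHomClass (M →+ AddCircle (1 : ℚ)) M (AddCircle (1 : ℚ)))

/-- If `M` is a left `R`-module, `M⁺` is a right `R`-module via `(c • r) m = c (r • m)`. -/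
instance CharMod.moduleOp (R : Type v) [Ring R] (M : Type u) [AddCommGroup M] [Module R M] :
    Module Rᵐᵒᵖ (CharMod M) where
  smul r c := (c : M →+ AddCircle (1 : ℚ)).comp (DistribMulAction.toAddMonoidHom M r.unop)
  one_smul c := AddMonoidHom.ext fun m => congrArg c (one_smul R m)
  mul_smul r s c := AddMonoidHom.ext fun m => congrArg c (mul_smul s.unop r.unop m)
  smul_zero r := rfl
  smul_add r c d := rfl
  add_smul r s c := AddMonoidHom.ext fun m => by
    show c ((r.unop + s.unop) • m) = c (r.unop • m) + c (s.unop • m)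
    rw [add_smul, map_add]
  zero_smul c := AddMonoidHom.ext fun m => by
    show c ((0 : R) • m) = 0
    rw [zero_smul, map_zero]

@[simp] lemma CharMod.op_smul_apply {R : Type v} [Ring R] {M : Type u} [AddCommGroup M]
    [Module R M] (r : Rᵐᵒᵖ) (c : CharMod M) (m : M) : (r • c) m = c (r.unop • m) := rfl

/-- If `N` is a right `R`-module, `N⁺` is a left `R`-module via `(r • c) n = c (n • r)`. -/
instance CharMod.moduleUnop (R : Type v) [Ring R] (N : Type u) [AddCommGroup N] [Module Rᵐᵒᵖ N] :
    Module R (CharMod N) where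
  smul r c := (c : N →+ AddCircle (1 : ℚ)).comp (DistribMulAction.toAddMonoidHom N (op r))
  one_smul c := AddMonoidHom.ext fun n => congrArg c (one_smul Rᵐᵒᵖ n)
  mul_smul r s c := AddMonoidHom.ext fun n => by
    show c ((op (r * s)) • n) = c (op s • op r • n)
    rw [← mul_smul]; rfl
  smul_zero r := rfl
  smul_add r c d := rfl
  add_smul r s c := AddMonoidHom.ext fun n => by
    show c ((op (r + s)) • n) = c (op r • n) + c (op s • n)
    rw [show op (r + s) = op r + op s from rfl, add_smul, map_add]
  zero_smul c := AddMonoidHom.ext fun n => by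
    show c ((op (0 : R)) • n) = 0
    rw [show op (0 : R) = (0 : Rᵐᵒᵖ) from rfl, zero_smul, map_zero]

@[simp] lemma CharMod.unop_smul_apply {R : Type v} [Ring R] {N : Type u} [AddCommGroup N]
    [Module Rᵐᵒᵖ N] (r : R) (c : CharMod N) (n : N) : (r • c) n = c (op r • n) := rfl

/-- The dual `f⁺ : C⁺ → A⁺` of a map `f : A → C` of left `R`-modules. -/
def charDual {R : Type v} [Ring R] {A C : Type u} [AddCommGroup A] [Module R A]
    [AddCommGroup C] [Module R C] (f : A →ₗ[R] C) : CharMod C →ₗ[Rᵐᵒᵖ] CharMod A where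
  toFun c := (c : C →+ AddCircle (1 : ℚ)).comp f.toAddMonoidHom
  map_add' _ _ := rfl
  map_smul' r c := AddMonoidHom.ext fun a => (congrArg c (f.map_smul r.unop a)).symm

/-- The canonical evaluation map `σ_M : M → M⁺⁺`. -/
def charEval (R : Type v) [Ring R] (M : Type u) [AddCommGroup M] [Module R M] :
    M →ₗ[R] CharMod (CharMod M) where
  toFun m :=
    { toFun := fun c => c m
      map_zero' := rfl
      map_add' := fun _ _ => rfl }
  map_add' m m' := AddMonoidHom.ext fun c => c.map_add m m'
  map_smul' r m := AddMonoidHom.ext fun c => rfl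

/-- A linear map `i : M → N` is a pure monomorphism if it is injective and every
map from a finitely presented module to `N ⧸ im i` lifts to `N`, i.e. the short exact
sequence `0 → M → N → N ⧸ im i → 0` remains exact after applying `Hom(F, -)` for all
finitely presented `F`. -/
def IsPureMono {R : Type v} [Ring R] {M N : Type u} [AddCommGroup M] [Module R M]
    [AddCommGroup N] [Module R N] (i : M →ₗ[R] N) : Prop :=
  Function.Injective i ∧
    ∀ (F : Type u) [AddCommGroup F] [Module R F], Module.FinitePresentation R F →
      ∀ g : F →ₗ[R] (N ⧸ LinearMap.range i),
        ∃ h : F →ₗ[R] N, (LinearMap.range i).mkQ.comp h = g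

/-- A module `E` is pure injective if every map to `E` extends along pure monomorphisms. -/
def IsPureInjective (R : Type v) [Ring R] (E : Type u) [AddCommGroup E] [Module R E] : Prop :=
  ∀ (M N : Type u) [AddCommGroup M] [Module R M] [AddCommGroup N] [Module R N]
    (i : M →ₗ[R] N), IsPureMono i →
      ∀ f : M →ₗ[R] E, ∃ g : N →ₗ[R] E, g.comp i = f

/-!
For `X ∈ 𝒞` and `g : A → X`, the precover property factors `g⁺ = f⁺ ∘ h` with `h : X⁺ → C⁺`;
dualising once more, `h⁺ ∘ σ_C ∘ f = σ_X ∘ g`, where `σ` is the evaluation map into the double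
character module. The map `σ_X : X → X⁺⁺` is a pure monomorphism, because characters separate the
points of `X`, so a finite system of linear equations with constants in `X` that is solvable in
`X⁺⁺` is already solvable in `X`. Since `X` is pure injective, `σ_X` has a retraction `p`, and
`p ∘ h⁺ ∘ σ_C` is the required factorisation of `g` through `f`.
-/

variable {R : Type*} [Ring R]

def charDualOp {Y Z : Type*} [AddCommGroup Y] [Module Rᵐᵒᵖ Y] [AddCommGroup Z] [Module Rᵐᵒᵖ Z]
    (u : Y →ₗ[Rᵐᵒᵖ] Z) : CharMod Z →ₗ[R] CharMod Y where
  toFun c := (c : Z →+ AddCircle (1 : ℚ)).comp u.toAddMonoidHom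
  map_add' _ _ := rfl
  map_smul' r c := AddMonoidHom.ext fun y => (congrArg c (u.map_smul (op r) y)).symm

@[ext] lemma CharMod.ext {M : Type*} [AddCommGroup M] {c c' : CharMod M} (h : ∀ m, c m = c' m) :
    c = c' :=
  AddMonoidHom.ext h

@[simp] lemma CharMod.zero_apply {M : Type*} [AddCommGroup M] (m : M) : (0 : CharMod M) m = 0 :=
  rfl

@[simp] lemma CharMod.sum_apply {M ι : Type*} [AddCommGroup M] (s : Finset ι) (c : ι → CharMod M)
    (m : M) : (∑ i ∈ s, c i) m = ∑ i ∈ s, c i m :=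
  AddMonoidHom.finsetSum_apply (fun i => (c i : M →+ AddCircle (1 : ℚ))) s m

lemma AddMonoidHom.mem_range_of_forall_charMod {P Q : Type*} [AddCommGroup P] [AddCommGroup Q]
    (α : P →+ Q) {q : Q} (h : ∀ χ : CharMod Q, (χ : Q →+ AddCircle (1 : ℚ)).comp α = 0 → χ q = 0) :
    q ∈ α.range := by
  by_contra hq
  have hq' : QuotientAddGroup.mk' α.range q ≠ 0 := by
    rwa [ne_eq, QuotientAddGroup.mk'_apply, QuotientAddGroup.eq_zero_iff]
  obtain ⟨χ, hχ⟩ := CharacterModule.exists_character_apply_ne_zero_of_ne_zero hq'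
  refine hχ (h (AddMonoidHom.comp χ (QuotientAddGroup.mk' α.range)) (AddMonoidHom.ext fun p => ?_))
  show χ (QuotientAddGroup.mk (α p)) = 0
  rw [(QuotientAddGroup.eq_zero_iff (α p)).mpr (α.mem_range.mpr ⟨p, rfl⟩), map_zero]

lemma sum_charMod_sum_smul_apply {ι κ : Type*} [Fintype ι] [Fintype κ] {N : Type*}
    [AddCommGroup N] [Module Rᵐᵒᵖ N] (r : κ → ι → R) (y : ι → CharMod N) (c : κ → N) :
    ∑ j, (∑ i, r j i • y i) (c j) = ∑ i, y i (∑ j, op (r j i) • c j) := by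
  simp only [CharMod.sum_apply, CharMod.unop_smul_apply, map_sum]
  exact Finset.sum_comm

lemma exists_sum_smul_eq_of_charEval {ι κ : Type*} [Fintype ι] [Fintype κ] {M : Type*}
    [AddCommGroup M] [Module R M] (r : κ → ι → R) (m : κ → M) (y : ι → CharMod (CharMod M))
    (hy : ∀ j, ∑ i, r j i • y i = charEval R M (m j)) :
    ∃ x : ι → M, ∀ j, ∑ i, r j i • x i = m j := by
  classical
  let α : (ι → M) →+ (κ → M) :=
    { toFun x j := ∑ i, r j i • x i
      map_zero' := by ext; simp
      map_add' x x' := by ext; simp [smul_add, Finset.sum_add_distrib] }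
  suffices m ∈ α.range from this.imp fun x hx j => congr_fun hx j
  refine α.mem_range_of_forall_charMod fun χ hχ => ?_
  let c : κ → CharMod M := fun j =>
    (χ : (κ → M) →+ AddCircle (1 : ℚ)).comp (AddMonoidHom.single (fun _ => M) j)
  have hχc : ∀ v, χ v = ∑ j, c j (v j) := fun v => by
    conv_lhs => rw [← Finset.univ_sum_single v, map_sum]
    rfl
  -- `χ ∘ α = 0` says that `c` solves the transposed homogeneous system.
  have hc : ∀ i, ∑ j, op (r j i) • c j = 0 := fun i => CharMod.ext fun a => by
    have hα : α (Pi.single i a) = fun j => r j i • a := by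
      ext j; simp [α, Pi.single_apply]
    have h0 : χ (α (Pi.single i a)) = 0 := (DFunLike.congr_fun hχ (Pi.single i a) :)
    rw [hα, hχc] at h0
    simpa using h0
  calc χ m = ∑ j, charEval R M (m j) (c j) := hχc m
    _ = ∑ j, (∑ i, r j i • y i) (c j) := by simp only [hy]
    _ = ∑ i, y i (∑ j, op (r j i) • c j) := sum_charMod_sum_smul_apply r y c
    _ = 0 := by simp [hc]

lemma charEval_injective (M : Type*) [AddCommGroup M] [Module R M] :
    Function.Injective (charEval R M) := fun a b hab =>
  sub_eq_zero.mp <| CharacterModule.eq_zero_of_character_apply fun c => by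
    rw [map_sub, sub_eq_zero]
    exact DFunLike.congr_fun hab (c : CharMod M)

lemma exists_linearMap_charEval_eq {ι κ : Type*} [Fintype ι] [Fintype κ] {M : Type*}
    [AddCommGroup M] [Module R M] (k : κ → ι → R) (Y : (ι → R) →ₗ[R] CharMod (CharMod M))
    (hY : ∀ j, Y (k j) ∈ LinearMap.range (charEval R M)) :
    ∃ x : (ι → R) →ₗ[R] M, ∀ j, charEval R M (x (k j)) = Y (k j) := by
  classical
  choose m hm using hY
  have hY_apply : ∀ v, Y v = ∑ i, v i • Y (Pi.single i 1) := fun v => by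
    rw [LinearMap.pi_apply_eq_sum_univ Y v]
    congr! with i j
    simp [Pi.single_apply, eq_comm]
  obtain ⟨x, hx⟩ := exists_sum_smul_eq_of_charEval k m (fun i => Y (Pi.single i 1))
    fun j => by rw [← hY_apply, hm]
  exact ⟨Fintype.linearCombination R x, fun j => by
    rw [Fintype.linearCombination_apply, hx, hm]⟩

lemma isPureMono_charEval (M : Type u) [AddCommGroup M] [Module R M] :
    IsPureMono (charEval R M) := by
  refine ⟨charEval_injective M, fun F _ _ hF g => ?_⟩
  obtain ⟨n, π, hπ⟩ := Module.Finite.exists_fin' R F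
  obtain ⟨s, k, hk⟩ :=
    Submodule.fg_iff_exists_fin_generating_family.mp (Module.FinitePresentation.fg_ker π hπ)
  obtain ⟨Y, hY⟩ := Module.projective_lifting_property (LinearMap.range (charEval R M)).mkQ
    (g ∘ₗ π) (Submodule.mkQ_surjective _)
  have hYk : ∀ j, Y (k j) ∈ LinearMap.range (charEval R M) := fun j => by
    have hkj : π (k j) = 0 := by
      rw [← LinearMap.mem_ker, ← hk]
      exact Submodule.subset_span ⟨j, rfl⟩
    rw [← Submodule.Quotient.mk_eq_zero, ← Submodule.mkQ_apply, ← LinearMap.comp_apply, hY,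
      LinearMap.comp_apply, hkj, map_zero]
  obtain ⟨x, hx⟩ := exists_linearMap_charEval_eq k Y hYk
  -- `Y - σ ∘ x` still lifts `g ∘ π` and kills the relations, so it descends to `F`.
  have hker : LinearMap.ker π ≤ LinearMap.ker (Y - charEval R M ∘ₗ x) := by
    rw [← hk, Submodule.span_le]
    rintro _ ⟨j, rfl⟩
    simp [hx j]
  refine ⟨(LinearMap.ker π).liftQ _ hker ∘ₗ (π.quotKerEquivOfSurjective hπ).symm.toLinearMap,
    LinearMap.ext fun w => ?_⟩
  obtain ⟨v, rfl⟩ := hπ w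
  have hσ : (LinearMap.range (charEval R M)).mkQ (charEval R M (x v)) = 0 :=
    (Submodule.Quotient.mk_eq_zero _).mpr (LinearMap.mem_range_self _ _)
  simp only [LinearMap.comp_apply, LinearEquiv.coe_coe,
    LinearMap.quotKerEquivOfSurjective_symm_apply, Submodule.liftQ_apply, LinearMap.sub_apply,
    map_sub, hσ, sub_zero]
  exact LinearMap.congr_fun hY v

lemma charDualOp_comp_charEval_comp {A C X : Type u} [AddCommGroup A] [Module R A]
    [AddCommGroup C] [Module R C] [AddCommGroup X] [Module R X] {f : A →ₗ[R] C}
    {g : A →ₗ[R] X} {h : CharMod X →ₗ[Rᵐᵒᵖ] CharMod C} (hfg : charDual f ∘ₗ h = charDual g) :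
    charDualOp h ∘ₗ charEval R C ∘ₗ f = charEval R X ∘ₗ g :=
  LinearMap.ext fun a => CharMod.ext fun c => DFunLike.congr_fun (LinearMap.congr_fun hfg c) a

theorem stmt5_general {R : Type u} [Ring R]
    (hpss : ∀ (X : Type u) [AddCommGroup X] [Module R X], IsPureInjective R X)
    {A C : Type u} [AddCommGroup A] [Module R A] [AddCommGroup C] [Module R C]
    (𝒞 : ∀ (X : Type u) [AddCommGroup X] [Module R X], Prop)
    (𝒟 : ∀ (Y : Type u) [AddCommGroup Y] [Module Rᵐᵒᵖ Y], Prop)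
    (hCD : ∀ (X : Type u) [AddCommGroup X] [Module R X], 𝒞 X → 𝒟 (CharMod X))
    (f : A →ₗ[R] C)
    (hfact : ∀ (Y : Type u) [AddCommGroup Y] [Module Rᵐᵒᵖ Y], 𝒟 Y →
      ∀ g : Y →ₗ[Rᵐᵒᵖ] CharMod A, ∃ h : Y →ₗ[Rᵐᵒᵖ] CharMod C, (charDual f).comp h = g) :
    ∀ (X : Type u) [AddCommGroup X] [Module R X], 𝒞 X →
      ∀ g : A →ₗ[R] X, ∃ h : C →ₗ[R] X, h.comp f = g := by
  intro X _ _ hX g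
  obtain ⟨h, hh⟩ := hfact (CharMod X) (hCD X hX) (charDual g)
  obtain ⟨p, hp⟩ := hpss X X _ (charEval R X) (isPureMono_charEval X) LinearMap.id
  refine ⟨p ∘ₗ charDualOp h ∘ₗ charEval R C, ?_⟩
  rw [LinearMap.comp_assoc, LinearMap.comp_assoc, charDualOp_comp_charEval_comp hh,
    ← LinearMap.comp_assoc, hp, LinearMap.id_comp]

/-- **Corollary 3.4.** Let `R` be left pure semisimple (every left `R`-module is pure
injective), `𝒞` a class of left `R`-modules and `𝒟` a class of right `R`-modules with
`𝒞⁺ ⊆ 𝒟`. If `f⁺ : C⁺ → A⁺` is a `𝒟`-precover of `A⁺` with `C ∈ 𝒞`, then `f` is a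
`𝒞`-preenvelope of `A`. -/
theorem stmt5 {R : Type u} [Ring R]
    (hpss : ∀ (X : Type u) [AddCommGroup X] [Module R X], IsPureInjective R X)
    {A C : Type u} [AddCommGroup A] [Module R A] [AddCommGroup C] [Module R C]
    (𝒞 : ∀ (X : Type u) [AddCommGroup X] [Module R X], Prop)
    (𝒟 : ∀ (Y : Type u) [AddCommGroup Y] [Module Rᵐᵒᵖ Y], Prop)
    (hCD : ∀ (X : Type u) [AddCommGroup X] [Module R X], 𝒞 X → 𝒟 (CharMod X))
    (hC : 𝒞 C) (f : A →ₗ[R] C)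
    (hdom : 𝒟 (CharMod C))
    (hfact : ∀ (Y : Type u) [AddCommGroup Y] [Module Rᵐᵒᵖ Y], 𝒟 Y →
      ∀ g : Y →ₗ[Rᵐᵒᵖ] CharMod A, ∃ h : Y →ₗ[Rᵐᵒᵖ] CharMod C, (charDual f).comp h = g) :
    ∀ (X : Type u) [AddCommGroup X] [Module R X], 𝒞 X →
      ∀ g : A →ₗ[R] X, ∃ h : C →ₗ[R] X, h.comp f = g :=
  stmt5_general hpss 𝒞 𝒟 hCD f hfact
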